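/- Let m > 0 and let a ≥ 0 be a constant. Then the function A ↦ A^{3/2} / (a + φ_m(A)) is strictly increasing on [36π m², ∞); equivalently, its derivative in A is strictly positive for A ≥ 36π m². -/

import Mathlib

/-- Area of the coordinate sphere of radius `r` in the Schwarzschild manifold of
mass `m`, in isotropic coordinates: `A_m(r) = 4π r² (1 + m/(2r))⁴`. -/
noncomputable def schwA (m r : ℝ) : ℝ := 4 * Real.pi * r ^ 2 * (1 + m / (2 * r)) ^ 4

/-- Volume enclosed between the horizon `r = m/2` and the coordinate sphere of radius `r`
in the Schwarzschild manifold of mass `m`: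
`V_m(r) = ∫_{m/2}^r 4π ρ² (1 + m/(2ρ))⁶ dρ`. -/
noncomputable def schwV (m r : ℝ) : ℝ :=
  ∫ ρ in (m / 2)..r, 4 * Real.pi * ρ ^ 2 * (1 + m / (2 * ρ)) ^ 6

/-- The Schwarzschild isoperimetric profile of mass `m`: `φ_m = V_m ∘ A_m⁻¹`, where
`A_m⁻¹ : [16πm², ∞) → [m/2, ∞)` is the inverse of the (bijective, strictly increasing)
area function `A_m : [m/2, ∞) → [16πm², ∞)`. -/
noncomputable def schwPhi (m A : ℝ) : ℝ :=
  schwV m (Function.invFunOn (schwA m) (Set.Ici (m / 2)) A)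

/-!
Parametrize by the isotropic radius `r` and write `w = m/2`, so that `A = 4π(r+w)⁴/r²` and
`φ_m(A) = 4π F(r)`, where `F` is the explicit primitive of `(ρ+w)⁶/ρ⁴` vanishing at `w`.
By the inverse function theorem `φ_m'(A) = (r+w)³/(2r(r-w))`, and `A^{3/2}/(a + φ_m(A))` has
positive derivative as soon as `2Aφ_m'(A) < 3φ_m(A)`, i.e. `(r+w)⁷/r³ < 3(r-w)F(r)`.
Bounding the logarithm in `F` by `log x ≥ 2(x-1)/(x+1)` turns this into the positivity of a
cubic in `s = r² + w²` and `q = rw`, which holds once `s ≥ 4q`, i.e. once `A ≥ 36πm²`.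
-/

open Real Set Filter Topology

theorem two_mul_sub_one_div_add_one_le_log {x : ℝ} (hx : 1 ≤ x) :
    2 * (x - 1) / (x + 1) ≤ log x := by
  have hx1 : 0 < x + 1 := by linarith
  have ht0 : 0 ≤ (x - 1) / (x + 1) := div_nonneg (by linarith) hx1.le
  have ht1 : (x - 1) / (x + 1) < 1 := (div_lt_one hx1).2 (by linarith)
  have hsum := hasSum_log_sub_log_of_abs_lt_one (abs_lt.2 ⟨by linarith, ht1⟩)
  have hlog : log (1 + (x - 1) / (x + 1)) - log (1 - (x - 1) / (x + 1)) = log x := by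
    rw [← log_div (by positivity) (by linarith)]
    congr 1
    field_simp
    ring
  rw [hlog] at hsum
  simpa [mul_div_assoc] using le_hasSum hsum 0 fun k _ => by positivity

theorem hasDerivAt_rpow_div (p : ℝ) {q : ℝ → ℝ} {q' x : ℝ} (hq : HasDerivAt q q' x)
    (hx : 0 < x) (hqx : q x ≠ 0) :
    HasDerivAt (fun y => y ^ p / q y) (x ^ (p - 1) * (p * q x - x * q') / q x ^ 2) x := by
  refine ((hasDerivAt_rpow_const (Or.inl hx.ne')).div hq hqx).congr_deriv ?_
  rw [rpow_sub_one hx.ne']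
  field_simp

noncomputable def schwVPrimitive (w ρ : ℝ) : ℝ :=
  ρ ^ 3 / 3 + 3 * w * ρ ^ 2 + 15 * w ^ 2 * ρ + 20 * w ^ 3 * log (ρ / w)
    - 15 * w ^ 4 / ρ - 3 * w ^ 5 / ρ ^ 2 - w ^ 6 / (3 * ρ ^ 3)

theorem schwVPrimitive_self (w : ℝ) : schwVPrimitive w w = 0 := by
  rcases eq_or_ne w 0 with rfl | hw
  · simp [schwVPrimitive]
  · simp only [schwVPrimitive, div_self hw, log_one]
    field_simp
    ring

theorem hasDerivAt_schwVPrimitive {w ρ : ℝ} (hw : w ≠ 0) (hρ : ρ ≠ 0) :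
    HasDerivAt (schwVPrimitive w) ((ρ + w) ^ 6 / ρ ^ 4) ρ := by
  have hlog : HasDerivAt (fun x => log (x / w)) (1 / w / (ρ / w)) ρ :=
    ((hasDerivAt_id' ρ).div_const w).log (div_ne_zero hρ hw)
  have hρ2 := pow_ne_zero 2 hρ
  have hρ3 : 3 * ρ ^ 3 ≠ 0 := by positivity
  unfold schwVPrimitive
  refine ((((((((hasDerivAt_pow 3 ρ).div_const 3).add
    ((hasDerivAt_pow 2 ρ).const_mul (3 * w))).add ((hasDerivAt_id' ρ).const_mul (15 * w ^ 2))).add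
    (hlog.const_mul (20 * w ^ 3))).sub
    ((hasDerivAt_const ρ (15 * w ^ 4)).div (hasDerivAt_id' ρ) hρ)).sub
    ((hasDerivAt_const ρ (3 * w ^ 5)).div (hasDerivAt_pow 2 ρ) hρ2)).sub
    ((hasDerivAt_const ρ (w ^ 6)).div ((hasDerivAt_pow 3 ρ).const_mul 3) hρ3)).congr_deriv ?_
  field_simp
  ring

theorem pow_seven_div_lt_schwVPrimitive {w r : ℝ} (hw : 0 < w) (hwr : w ≤ r)
    (h : 4 * r * w ≤ r ^ 2 + w ^ 2) :
    (r + w) ^ 7 / r ^ 3 < 3 * (r - w) * schwVPrimitive w r := by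
  have hr : 0 < r := hw.trans_le hwr
  have hlog : 2 * (r - w) / (r + w) ≤ log (r / w) := by
    convert two_mul_sub_one_div_add_one_le_log ((one_le_div hw).2 hwr) using 1
    field_simp
  set P := 3 * (r ^ 2 + w ^ 2) ^ 3 + 48 * (r ^ 2 + w ^ 2) ^ 2 * (r * w)
      + 156 * (r ^ 2 + w ^ 2) * (r * w) ^ 2 - 1296 * (r * w) ^ 3
  have hP : 0 < P := by
    have hq : 0 < r * w := by positivity
    nlinarith [mul_le_mul h h (by positivity) (by positivity), pow_pos hq 3, mul_pos hq hq]
  set R := r ^ 3 / 3 + 3 * w * r ^ 2 + 15 * w ^ 2 * r + 20 * w ^ 3 * (2 * (r - w) / (r + w))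
      - 15 * w ^ 4 / r - 3 * w ^ 5 / r ^ 2 - w ^ 6 / (3 * r ^ 3)
  have hR : 3 * (r - w) * R - (r + w) ^ 7 / r ^ 3 = r * w * P / (3 * r ^ 3 * (r + w)) := by
    simp only [R, P]
    field_simp
    ring
  calc (r + w) ^ 7 / r ^ 3 < 3 * (r - w) * R := by
        rw [← sub_pos, hR]
        exact div_pos (mul_pos (mul_pos hr hw) hP) (by positivity)
    _ ≤ 3 * (r - w) * schwVPrimitive w r := by
        simp only [R, schwVPrimitive]
        gcongr

theorem schwV_eq_schwVPrimitive {m r : ℝ} (hm : 0 < m) (hr : 0 < r) :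
    schwV m r = 4 * π * schwVPrimitive (m / 2) r := by
  have hpos : ∀ x ∈ uIcc (m / 2) r, x ≠ 0 := fun x hx =>
    ((lt_min (half_pos hm) hr).trans_le hx.1).ne'
  have hderiv : ∀ x ∈ uIcc (m / 2) r, HasDerivAt (fun ρ => 4 * π * schwVPrimitive (m / 2) ρ)
      (4 * π * x ^ 2 * (1 + m / (2 * x)) ^ 6) x := fun x hx =>
    ((hasDerivAt_schwVPrimitive (half_pos hm).ne' (hpos x hx)).const_mul (4 * π)).congr_deriv
      (by field_simp [hpos x hx])
  have hint : IntervalIntegrable (fun ρ => 4 * π * ρ ^ 2 * (1 + m / (2 * ρ)) ^ 6)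
      MeasureTheory.volume (m / 2) r :=
    ContinuousOn.intervalIntegrable fun x hx =>
      ContinuousAt.continuousWithinAt (by fun_prop (disch := simp [hpos x hx]))
  rw [schwV, intervalIntegral.integral_eq_sub_of_hasDerivAt hderiv hint, schwVPrimitive_self]
  ring

theorem hasDerivAt_schwV {m r : ℝ} (hm : 0 < m) (hr : 0 < r) :
    HasDerivAt (schwV m) (4 * π * ((r + m / 2) ^ 6 / r ^ 4)) r :=
  ((hasDerivAt_schwVPrimitive (half_pos hm).ne' hr.ne').const_mul (4 * π)).congr_of_eventuallyEq
    (eventually_of_mem (Ioi_mem_nhds hr) fun _ hρ => schwV_eq_schwVPrimitive hm hρ)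

theorem schwA_eq_div (m : ℝ) {r : ℝ} (hr : r ≠ 0) :
    schwA m r = 4 * π * (r + m / 2) ^ 4 / r ^ 2 := by
  unfold schwA
  field_simp

theorem hasStrictDerivAt_schwA (m : ℝ) {r : ℝ} (hr : r ≠ 0) :
    HasStrictDerivAt (schwA m) (8 * π * (r + m / 2) ^ 3 * (r - m / 2) / r ^ 3) r := by
  have h2r : 2 * r ≠ 0 := mul_ne_zero two_ne_zero hr
  unfold schwA
  refine (((hasStrictDerivAt_pow 2 r).const_mul (4 * π)).mul
    (((hasStrictDerivAt_const r 1).add ((hasStrictDerivAt_const r m).div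
      ((hasStrictDerivAt_id r).const_mul 2) h2r)).pow 4)).congr_deriv ?_
  simp only [Pi.add_apply, Pi.div_apply, Pi.pow_apply, id, Nat.add_one_sub_one]
  field_simp
  ring

theorem continuousOn_schwA (m : ℝ) : ContinuousOn (schwA m) (Ioi 0) := fun _ hr =>
  (hasStrictDerivAt_schwA m (ne_of_gt hr)).hasDerivAt.continuousAt.continuousWithinAt

theorem schwA_strictMonoOn {m : ℝ} (hm : 0 < m) : StrictMonoOn (schwA m) (Ici (m / 2)) := by
  refine strictMonoOn_of_deriv_pos (convex_Ici _)
    ((continuousOn_schwA m).mono fun r hr => (half_pos hm).trans_le hr) fun r hr => ?_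
  rw [interior_Ici, mem_Ioi] at hr
  have hr0 : 0 < r := (half_pos hm).trans hr
  rw [(hasStrictDerivAt_schwA m hr0.ne').hasDerivAt.deriv]
  have : 0 < r - m / 2 := sub_pos.2 hr
  positivity

theorem schwPhi_schwA {m r : ℝ} (hm : 0 < m) (hr : m / 2 ≤ r) :
    schwPhi m (schwA m r) = schwV m r := by
  have hex : ∃ x ∈ Ici (m / 2), schwA m x = schwA m r := ⟨r, hr, rfl⟩
  rw [schwPhi, (schwA_strictMonoOn hm).injOn (Function.invFunOn_mem hex) hr
    (Function.invFunOn_eq hex)]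

theorem exists_schwA_eq {m A : ℝ} (hm : 0 < m) (hA : 16 * π * m ^ 2 ≤ A) :
    ∃ r, m / 2 ≤ r ∧ schwA m r = A := by
  set R := √A + m / 2
  have hR : m / 2 ≤ R := le_add_of_nonneg_left (sqrt_nonneg A)
  have hR0 : 0 < R := (half_pos hm).trans_le hR
  have hleft : schwA m (m / 2) = 16 * π * m ^ 2 := by
    unfold schwA
    field_simp
    ring
  have hright : A ≤ schwA m R := calc
    A = √A ^ 2 := (sq_sqrt ((by positivity : 0 ≤ 16 * π * m ^ 2).trans hA)).symm
    _ ≤ 4 * π * R ^ 2 * 1 := by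
      have : √A ≤ R := le_add_of_nonneg_right (half_pos hm).le
      nlinarith [pow_le_pow_left₀ (sqrt_nonneg A) this 2, pi_gt_three, sq_nonneg R]
    _ ≤ schwA m R := by
      unfold schwA
      gcongr
      exact one_le_pow₀ (le_add_of_nonneg_right (by positivity))
  obtain ⟨r, hr, hrA⟩ := intermediate_value_Icc hR
    ((continuousOn_schwA m).mono fun x hx => (half_pos hm).trans_le hx.1) ⟨hleft ▸ hA, hright⟩
  exact ⟨r, hr.1, hrA⟩

theorem hasDerivAt_schwPhi {m r : ℝ} (hm : 0 < m) (hr : m / 2 < r) :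
    HasDerivAt (schwPhi m) ((r + m / 2) ^ 3 / (2 * r * (r - m / 2))) (schwA m r) := by
  have hr0 : 0 < r := (half_pos hm).trans hr
  have hrw : 0 < r - m / 2 := sub_pos.2 hr
  have hA := hasStrictDerivAt_schwA m hr0.ne'
  have hA' : 8 * π * (r + m / 2) ^ 3 * (r - m / 2) / r ^ 3 ≠ 0 := by positivity
  set g := hA.localInverse (schwA m) _ r hA'
  have hg := hA.to_localInverse hA'
  have hgr : g (schwA m r) = r := (hA.eventually_left_inverse hA').self_of_nhds
  have hphi : schwV m ∘ g =ᶠ[𝓝 (schwA m r)] schwPhi m := by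
    filter_upwards [hA.eventually_right_inverse hA',
      hg.hasDerivAt.continuousAt.eventually (hgr ▸ Ioi_mem_nhds hr)] with y hy hgy
    conv_rhs => rw [← hy]
    exact (schwPhi_schwA hm (le_of_lt hgy)).symm
  refine (((hgr ▸ hasDerivAt_schwV hm hr0).comp _ hg.hasDerivAt).congr_of_eventuallyEq
    hphi.symm).congr_deriv ?_
  rw [hgr]
  field_simp
  ring

theorem four_mul_half_le_of_le_schwA {m r : ℝ} (hr : r ≠ 0)
    (h : 36 * π * m ^ 2 ≤ schwA m r) :
    4 * r * (m / 2) ≤ r ^ 2 + (m / 2) ^ 2 := by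
  rw [schwA_eq_div m hr, le_div_iff₀ (by positivity)] at h
  have h4 : (3 * m * r) ^ 2 ≤ ((r + m / 2) ^ 2) ^ 2 := by nlinarith [pi_pos]
  nlinarith [le_of_pow_le_pow_left₀ two_ne_zero (sq_nonneg _) h4]

theorem two_mul_mul_deriv_schwPhi_lt {m r : ℝ} (hm : 0 < m) (hr : m / 2 ≤ r)
    (h : 4 * r * (m / 2) ≤ r ^ 2 + (m / 2) ^ 2) :
    2 * schwA m r * ((r + m / 2) ^ 3 / (2 * r * (r - m / 2))) < 3 * schwPhi m (schwA m r) := by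
  have hr0 : 0 < r := (half_pos hm).trans_le hr
  have hrw : 0 < r - m / 2 := by nlinarith
  have key := pow_seven_div_lt_schwVPrimitive (half_pos hm) hr h
  rw [schwPhi_schwA hm hr, schwV_eq_schwVPrimitive hm hr0, schwA_eq_div m hr0.ne']
  calc 2 * (4 * π * (r + m / 2) ^ 4 / r ^ 2) * ((r + m / 2) ^ 3 / (2 * r * (r - m / 2)))
      = 4 * π * ((r + m / 2) ^ 7 / r ^ 3) / (r - m / 2) := by
        field_simp
    _ < 3 * (4 * π * schwVPrimitive (m / 2) r) := by
        rw [div_lt_iff₀ hrw]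
        nlinarith [pi_pos]

theorem exists_pos_hasDerivAt_schwPhi_ratio {m a A : ℝ} (hm : 0 < m) (ha : 0 ≤ a)
    (hA : 36 * π * m ^ 2 ≤ A) :
    ∃ d, 0 < d ∧ HasDerivAt (fun A : ℝ => A ^ ((3 : ℝ) / 2) / (a + schwPhi m A)) d A := by
  obtain ⟨r, hr, rfl⟩ := exists_schwA_eq hm (le_trans (by gcongr; norm_num) hA)
  have hr0 : 0 < r := (half_pos hm).trans_le hr
  have h4 := four_mul_half_le_of_le_schwA hr0.ne' hA
  have hr' : m / 2 < r := by nlinarith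
  have hA0 : 0 < schwA m r := (by positivity : 0 < 36 * π * m ^ 2).trans_le hA
  have hφ' : 0 < (r + m / 2) ^ 3 / (2 * r * (r - m / 2)) := by
    have := sub_pos.2 hr'
    positivity
  have hlt := two_mul_mul_deriv_schwPhi_lt hm hr h4
  have hq : 0 < a + schwPhi m (schwA m r) := by nlinarith [mul_pos hA0 hφ']
  refine ⟨_, ?_, hasDerivAt_rpow_div _ ((hasDerivAt_schwPhi hm hr').const_add a) hA0 hq.ne'⟩
  exact div_pos (mul_pos (rpow_pos_of_pos hA0 _) (by nlinarith)) (by positivity)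

/-- For `m > 0` and `a ≥ 0`, the function `A ↦ A^{3/2}/(a + φ_m(A))` is
strictly increasing on `[36πm², ∞)`; equivalently its derivative is strictly positive
there. -/
theorem schwPhi_isoperimetric_ratio_mono (m a : ℝ) (hm : 0 < m) (ha : 0 ≤ a) :
    StrictMonoOn (fun A : ℝ => A ^ ((3 : ℝ) / 2) / (a + schwPhi m A))
      (Set.Ici (36 * Real.pi * m ^ 2)) ∧
    ∀ A : ℝ, 36 * Real.pi * m ^ 2 ≤ A →
      0 < deriv (fun A : ℝ => A ^ ((3 : ℝ) / 2) / (a + schwPhi m A)) A := by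
  have hderiv := fun A (hA : 36 * π * m ^ 2 ≤ A) => exists_pos_hasDerivAt_schwPhi_ratio hm ha hA
  refine ⟨strictMonoOn_of_deriv_pos (convex_Ici _) (fun A hA => ?_) fun A hA => ?_,
    fun A hA => ?_⟩
  · obtain ⟨d, -, hd⟩ := hderiv A hA
    exact hd.continuousAt.continuousWithinAt
  · rw [interior_Ici] at hA
    obtain ⟨d, hd0, hd⟩ := hderiv A (le_of_lt hA)
    rwa [hd.deriv]
  · obtain ⟨d, hd0, hd⟩ := hderiv A hA
    rwa [hd.deriv]
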